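/- arXiv:1210.7136 — 3 statements merged into one kernel-verified Lean document; each statement's English description precedes it below -/
import Mathlib

section
/- There is no total computable function F : ℕ × ℕ → ℕ such that F(x,y) = 1 if for all z, φ_x(z)↓ implies φ_x(z) ≤ φ_y(z), and F(x,y) = 0 otherwise, where φ is a Gödel numbering of partial computable functions. -/
/-!
The complement of the halting problem reduces to the relation. By s-m-n, `c ↦` an index of
`z ↦ (1 if φ_c(0)↓, else ↑)` is computable, and this function is pointwise bounded by the
constant `0` exactly when `φ_c(0)` diverges; a decider `F` would therefore decide halting.
-/

open Nat.Partrec (Code)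

/-- The Gödel numbering of partial computable functions via `Nat.Partrec.Code`. -/
noncomputable def godel (x : ℕ) : ℕ →. ℕ :=
  (Denumerable.ofNat Nat.Partrec.Code x).eval

open Encodable

def PointwiseBoundedBy (f g : ℕ →. ℕ) : Prop :=
  ∀ z a, a ∈ f z → ∃ b ∈ g z, a ≤ b

@[simp]
theorem godel_encode (c : Code) : godel (encode c) = c.eval := by
  simp [godel]

theorem Nat.Partrec.Code.exists_computable_eval_eq {α : Type*} [Primcodable α]
    {f : α → ℕ →. ℕ} (hf : Partrec₂ f) :
    ∃ g : α → Code, Computable g ∧ ∀ a, (g a).eval = f a := by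
  obtain ⟨c, hc⟩ := exists_code.1 hf
  refine ⟨fun a => c.curry (encode a),
    (primrec₂_curry.comp (_root_.Primrec.const c) Primrec.encode).to_comp,
    fun a => funext fun x => ?_⟩
  simpa [eval_curry, Part.map_id'] using congrFun hc (encode (a, x))

theorem ComputablePred.of_computable_indicator {α : Type*} [Primcodable α] {p : α → Prop}
    {F : α → ℕ} (hF : Computable F) (h₁ : ∀ a, p a → F a = 1)
    (h₀ : ∀ a, ¬ p a → F a = 0) : ComputablePred p := by
  refine ComputablePred.computable_iff.2 ⟨fun a => decide (F a = 1), ?_, ?_⟩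
  · exact (Primrec.eq.comp Primrec.id (Primrec.const 1)).decide.to_comp.comp hF
  · funext a
    by_cases ha : p a <;> simp [ha, h₁, h₀]

theorem not_dom_iff_pointwiseBoundedBy_zero (o : Part ℕ) :
    ¬ o.Dom ↔ PointwiseBoundedBy (fun _ => o.map fun _ => 1) (fun _ => Part.some 0) := by
  simp [PointwiseBoundedBy, Part.dom_iff_mem]

/-- There is no total computable `F : ℕ × ℕ → ℕ` such that `F (x, y) = 1` if for all `z`,
`φ_x z ↓` implies `φ_x z ≤ φ_y z`, and `F (x, y) = 0` otherwise. -/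
theorem sup_interpretation_verification_undecidable :
    ¬ ∃ F : ℕ × ℕ → ℕ, Computable F ∧
      ∀ x y : ℕ,
        ((∀ z a : ℕ, a ∈ godel x z → ∃ b ∈ godel y z, a ≤ b) → F (x, y) = 1) ∧
        (¬ (∀ z a : ℕ, a ∈ godel x z → ∃ b ∈ godel y z, a ≤ b) → F (x, y) = 0) := by
  rintro ⟨F, hF, hspec⟩
  have hbounded :
      ComputablePred fun p : ℕ × ℕ => PointwiseBoundedBy (godel p.1) (godel p.2) :=
    .of_computable_indicator hF (fun p => (hspec p.1 p.2).1) (fun p => (hspec p.1 p.2).2)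
  obtain ⟨g, hg, hgeval⟩ := Code.exists_computable_eval_eq
    (f := fun (c : Code) (_ : ℕ) => (c.eval 0).map fun _ => 1)
    (((Code.eval_part.comp .fst (.const 0)).map ((Computable.const 1).comp .fst).to₂).to₂)
  have hreduce : (fun c : Code => ¬ (c.eval 0).Dom) ≤₀
      fun p : ℕ × ℕ => PointwiseBoundedBy (godel p.1) (godel p.2) := by
    refine ⟨fun c => (encode (g c), encode (Code.const 0)),
      (Computable.encode.comp hg).pair (.const _), fun c => ?_⟩
    simp only [godel_encode, hgeval, show (Code.const 0).eval = _ from funext (Code.eval_const 0)]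
    exact not_dom_iff_pointwiseBoundedBy_zero _
  exact ComputablePred.halting_problem 0 <| by
    simpa using (ComputablePred.computable_of_manyOneReducible hreduce hbounded).not
end

section
/- Let c, k, k' be positive reals with k, k' ≥ 1 satisfying: 2k' ≥ c²·k', k' ≥ c·k, c·k ≥ k', and c·k' ≥ 2k. Then c = √2. In particular c is irrational, and no rational c satisfies these constraints. -/
/-- If `c, k, k'` are positive reals with `k, k' ≥ 1` satisfying `2k' ≥ c²·k'`,
`k' ≥ c·k`, `c·k ≥ k'` and `c·k' ≥ 2k`, then `c = √2`; in particular `c` is irrational,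
so no rational number satisfies these constraints. -/
theorem irrational_qi_coefficient (c k k' : ℝ) (hc : 0 < c) (hk : 1 ≤ k) (hk' : 1 ≤ k')
    (h1 : c ^ 2 * k' ≤ 2 * k') (h2 : c * k ≤ k') (h3 : k' ≤ c * k) (h4 : 2 * k ≤ c * k') :
    c = Real.sqrt 2 ∧ Irrational c ∧ ∀ q : ℚ, c ≠ (q : ℝ) := by
  have hkk : k' = c * k := le_antisymm h3 h2
  have hk0 : (0:ℝ) < k := lt_of_lt_of_le one_pos hk
  have hk'0 : (0:ℝ) < k' := lt_of_lt_of_le one_pos hk'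
  have hle : c ^ 2 ≤ 2 := le_of_mul_le_mul_right (by linarith) hk'0
  have hge : 2 ≤ c ^ 2 := by
    have : 2 * k ≤ c ^ 2 * k := by rw [hkk] at h4; nlinarith
    exact le_of_mul_le_mul_right (by linarith) hk0
  have hsq : c ^ 2 = 2 := le_antisymm hle hge
  have hcs : c = Real.sqrt 2 := by
    rw [← Real.sqrt_sq hc.le, hsq]
  refine ⟨hcs, ?_, ?_⟩
  · rw [hcs]; exact irrational_sqrt_two
  · intro q hq
    exact (hcs ▸ irrational_sqrt_two) ⟨q, hq.symm⟩
end

section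
/- Let R be a terminating TRS. Define θ on constructors additively (θ(c)=0 for 0-ary c, θ(c)(X̄)=ΣX_i+1 otherwise) and for defined f of arity n set θ(f)(X₁,…,Xₙ) = (Σ X_i + 1)·|R|^{rc_R(Σ X_i + 1)}, where rc_R is the runtime complexity function. Then θ is a sup-interpretation: whenever f(v₁,…,vₙ) reduces to a constructor term v, θ(f)(|v₁|,…,|vₙ|) ≥ |v| = θ(v). -/
open scoped NNReal

inductive Trm (Sym : Type) : Type where
  | var : ℕ → Trm Sym
  | app : Sym → List (Trm Sym) → Trm Sym

namespace Trm

variable {Sym : Type}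

/-- The size of a term: number of symbol occurrences. -/
def size : Trm Sym → ℕ
  | .var _ => 1
  | .app _ ts => 1 + (ts.attach.map (fun t => size t.1)).sum
decreasing_by all_goals (simp only [Trm.app.sizeOf_spec]; have := List.sizeOf_lt_of_mem t.2; omega)

/-- Applying a substitution to a term. -/
def subst (σ : ℕ → Trm Sym) : Trm Sym → Trm Sym
  | .var i => σ i
  | .app f ts => .app f (ts.attach.map (fun t => subst σ t.1))
decreasing_by all_goals (simp only [Trm.app.sizeOf_spec]; have := List.sizeOf_lt_of_mem t.2; omega)

/-- Interpretation of a term with respect to an assignment `θ` and a valuation `ρ`. -/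
def interp (θ : Sym → List ℝ≥0 → ℝ≥0) (ρ : ℕ → ℝ≥0) : Trm Sym → ℝ≥0
  | .var i => ρ i
  | .app f ts => θ f (ts.attach.map (fun t => interp θ ρ t.1))
decreasing_by all_goals (simp only [Trm.app.sizeOf_spec]; have := List.sizeOf_lt_of_mem t.2; omega)

/-- Constructor terms: closed terms all of whose symbols belong to `C`. -/
inductive CTerm (C : Set Sym) : Trm Sym → Prop
  | app : ∀ (c : Sym) (ts : List (Trm Sym)), c ∈ C → (∀ t ∈ ts, CTerm C t) →
      CTerm C (.app c ts)

/-- `VarIn x t` : the variable `x` occurs in the term `t`. -/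
inductive VarIn (x : ℕ) : Trm Sym → Prop
  | var : VarIn x (.var x)
  | app : ∀ (f : Sym) (ts : List (Trm Sym)) (t : Trm Sym), t ∈ ts → VarIn x t →
      VarIn x (.app f ts)

/-- `Sub s t` : `s` is a subterm of `t`. -/
inductive Sub : Trm Sym → Trm Sym → Prop
  | refl : ∀ t, Sub t t
  | app : ∀ (s t : Trm Sym) (f : Sym) (ts : List (Trm Sym)), t ∈ ts → Sub s t →
      Sub s (.app f ts)

end Trm

/-- One-hole contexts. -/
inductive Ctx (Sym : Type) : Type where
  | hole : Ctx Sym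
  | app : Sym → List (Trm Sym) → Ctx Sym → List (Trm Sym) → Ctx Sym

/-- Filling the hole of a context with a term. -/
def Ctx.fill {Sym : Type} : Ctx Sym → Trm Sym → Trm Sym
  | .hole, t => t
  | .app f pre C post, t => .app f (pre ++ C.fill t :: post)

/-- One-step rewriting with respect to a set of rules `R`. -/
def Rw {Sym : Type} (R : List (Trm Sym × Trm Sym)) (s t : Trm Sym) : Prop :=
  ∃ (Cx : Ctx Sym) (l r : Trm Sym) (σ : ℕ → Trm Sym),
    (l, r) ∈ R ∧ s = Cx.fill (Trm.subst σ l) ∧ t = Cx.fill (Trm.subst σ r)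

/-- `n`-step rewriting. -/
def RwN {Sym : Type} (R : List (Trm Sym × Trm Sym)) : ℕ → Trm Sym → Trm Sym → Prop
  | 0 => Eq
  | n + 1 => fun s t => ∃ u, Rw R s u ∧ RwN R n u t

/-- A monotonic assignment. -/
def MonoAssign {Sym : Type} (θ : Sym → List ℝ≥0 → ℝ≥0) : Prop :=
  ∀ (f : Sym) (xs ys : List ℝ≥0), List.Forall₂ (· ≤ ·) xs ys → θ f xs ≤ θ f ys

/-- A strictly monotonic assignment. -/
def StrictMonoAssign {Sym : Type} (θ : Sym → List ℝ≥0 → ℝ≥0) : Prop :=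
  ∀ (f : Sym) (pre post : List ℝ≥0) (x y : ℝ≥0), x < y →
    θ f (pre ++ x :: post) < θ f (pre ++ y :: post)

/-- The subterm property. -/
def SubtermAssign {Sym : Type} (θ : Sym → List ℝ≥0 → ℝ≥0) : Prop :=
  ∀ (f : Sym) (xs : List ℝ≥0) (x : ℝ≥0), x ∈ xs → x ≤ θ f xs

/-- An additive assignment with constructor constants `k c`. -/
def AdditiveAssign {Sym : Type} (C : Set Sym) (k : Sym → ℝ≥0)
    (θ : Sym → List ℝ≥0 → ℝ≥0) : Prop :=
  ∀ c ∈ C, (1 ≤ k c) ∧ θ c [] = 0 ∧ ∀ xs : List ℝ≥0, xs ≠ [] → θ c xs = xs.sum + k c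

open Trm

/-!
A rewrite step replaces an instance `σ l` of a left-hand side by `σ r`. Every variable of `r`
occurs in `l`, so each `σ x` it uses has size at most `|σ l|`, whence `|σ r| ≤ |r| · |σ l|`;
as contexts add a fixed amount of size, one step multiplies the size of a term by at most `|R|`.
Along a derivation of length `n ≤ rc |f(v̄)|` from `f(v̄)` the size thus grows at most by the
factor `|R| ^ n ≤ |R| ^ rc |f(v̄)|`.
-/

section

variable {Sym : Type}

namespace Trm

theorem size_app (f : Sym) (ts : List (Trm Sym)) :
    size (app f ts) = 1 + (ts.map size).sum := by
  rw [size, List.attach_map_val]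

theorem subst_app (σ : ℕ → Trm Sym) (f : Sym) (ts : List (Trm Sym)) :
    subst σ (app f ts) = app f (ts.map (subst σ)) := by
  rw [subst, List.attach_map_val]

theorem one_le_size : ∀ t : Trm Sym, 1 ≤ size t
  | .var _ => by rw [size]
  | .app f ts => by rw [size_app]; omega

theorem size_le_size_subst_of_varIn (σ : ℕ → Trm Sym) {x : ℕ} {t : Trm Sym} (h : VarIn x t) :
    size (σ x) ≤ size (subst σ t) := by
  induction h with
  | var => exact le_of_eq (by rw [subst])
  | app f ts t ht _ ih =>
    rw [subst_app, size_app, List.map_map]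
    have : size (subst σ t) ≤ (ts.map (size ∘ subst σ)).sum :=
      List.le_sum_of_mem (List.mem_map_of_mem ht)
    omega

theorem size_subst_le_mul {σ : ℕ → Trm Sym} {B : ℕ} (hB : 1 ≤ B) :
    ∀ t : Trm Sym, (∀ x, VarIn x t → size (σ x) ≤ B) → size (subst σ t) ≤ size t * B
  | .var i, h => by simpa [subst, size] using h i .var
  | .app f ts, h => by
    have hargs : (ts.map (size ∘ subst σ)).sum ≤ (ts.map fun u => size u * B).sum :=
      List.sum_le_sum fun u hu =>
        size_subst_le_mul hB u fun x hx => h x (.app f ts u hu hx)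
    rw [subst_app, size_app, size_app, List.map_map, add_mul, one_mul]
    rw [List.sum_map_mul_right] at hargs
    omega
decreasing_by simp only [Trm.app.sizeOf_spec]; have := List.sizeOf_lt_of_mem hu; omega

theorem size_subst_le_mul_size_subst {σ : ℕ → Trm Sym} {l r : Trm Sym}
    (hrl : ∀ x, VarIn x r → VarIn x l) :
    size (subst σ r) ≤ size r * size (subst σ l) :=
  size_subst_le_mul (one_le_size _) r fun x hx => size_le_size_subst_of_varIn σ (hrl x hx)

end Trm

theorem Ctx.size_fill_le_mul {s t : Trm Sym} {k : ℕ} (hk : 1 ≤ k)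
    (hst : size t ≤ size s * k) : ∀ Cx : Ctx Sym, size (Cx.fill t) ≤ size (Cx.fill s) * k
  | .hole => hst
  | .app f pre Cx post => by
    have ih := Ctx.size_fill_le_mul hk hst Cx
    simp only [Ctx.fill, size_app, List.map_append, List.map_cons, List.sum_append,
      List.sum_cons]
    have hrest := Nat.le_mul_of_pos_right (1 + (pre.map size).sum + (post.map size).sum) hk
    linarith

/-- The size `|R|` of a rewrite system: the total size of its rules. -/
def trsSize (R : List (Trm Sym × Trm Sym)) : ℕ :=
  (R.map fun p => size p.1 + size p.2).sum

theorem size_rhs_le_trsSize {R : List (Trm Sym × Trm Sym)} {l r : Trm Sym} (hlr : (l, r) ∈ R) :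
    size r ≤ trsSize R :=
  (Nat.le_add_left _ (size l)).trans (List.le_sum_of_mem (List.mem_map_of_mem hlr))

section Rewriting

variable {R : List (Trm Sym × Trm Sym)} (hvar : ∀ p ∈ R, ∀ x : ℕ, VarIn x p.2 → VarIn x p.1)
  (hR : 1 ≤ trsSize R)
include hvar hR

theorem size_le_of_rw {s t : Trm Sym} (h : Rw R s t) : size t ≤ size s * trsSize R := by
  obtain ⟨Cx, l, r, σ, hlr, rfl, rfl⟩ := h
  refine Ctx.size_fill_le_mul hR ?_ Cx
  calc size (subst σ r) ≤ size r * size (subst σ l) :=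
        size_subst_le_mul_size_subst (hvar (l, r) hlr)
    _ ≤ trsSize R * size (subst σ l) := Nat.mul_le_mul_right _ (size_rhs_le_trsSize hlr)
    _ = size (subst σ l) * trsSize R := Nat.mul_comm _ _

theorem size_le_of_rwN : ∀ {n : ℕ} {s t : Trm Sym}, RwN R n s t →
    size t ≤ size s * trsSize R ^ n
  | 0, _, _, rfl => by rw [pow_zero, mul_one]
  | n + 1, s, t, ⟨u, hsu, hut⟩ =>
    calc size t ≤ size u * trsSize R ^ n := size_le_of_rwN hut
      _ ≤ size s * trsSize R * trsSize R ^ n :=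
        Nat.mul_le_mul_right _ (size_le_of_rw hvar hR hsu)
      _ = size s * trsSize R ^ (n + 1) := by ring

end Rewriting

end

theorem runtime_complexity_gives_sup_interpretation_general {Sym : Type}
    (C D : Set Sym)
    (R : List (Trm Sym × Trm Sym))
    (hvar : ∀ p ∈ R, ∀ x : ℕ, VarIn x p.2 → VarIn x p.1)
    (hR : 1 ≤ (R.map fun p => size p.1 + size p.2).sum)
    (rc : ℕ → ℕ)
    (hrc : ∀ (g : Sym) (us : List (Trm Sym)) (n : ℕ) (s : Trm Sym) (m : ℕ),
      g ∈ D → (∀ t ∈ us, CTerm C t) → RwN R n (.app g us) s →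
      size (Trm.app g us) ≤ m → n ≤ rc m)
    (f : Sym) (hf : f ∈ D) (vs : List (Trm Sym)) (hvs : ∀ t ∈ vs, CTerm C t)
    (v : Trm Sym) (n : ℕ) (hred : RwN R n (.app f vs) v) :
    size v ≤ ((vs.map size).sum + 1) *
      ((R.map fun p => size p.1 + size p.2).sum) ^ (rc ((vs.map size).sum + 1)) := by
  have hsize : size (Trm.app f vs) = (vs.map size).sum + 1 := by rw [size_app, add_comm]
  have hlen : n ≤ rc ((vs.map size).sum + 1) := hrc f vs n v _ hf hvs hred hsize.le
  calc size v ≤ size (Trm.app f vs) * trsSize R ^ n := size_le_of_rwN hvar hR hred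
    _ ≤ ((vs.map size).sum + 1) * trsSize R ^ rc ((vs.map size).sum + 1) := by
      rw [hsize]
      exact Nat.mul_le_mul_left _ (Nat.pow_le_pow_right hR hlen)

/-- Let `R` be a terminating constructor TRS, and let `rc` bound its runtime complexity
(the maximal derivation length of basic terms, in their size). Then the assignment
sending a defined symbol `f` to `(X₁, …, Xₙ) ↦ (Σ Xᵢ + 1) · |R| ^ (rc (Σ Xᵢ + 1))` is a
sup-interpretation: whenever a basic term `f (v₁, …, vₙ)` reduces to a constructor term
`v`, we have `(Σ |vᵢ| + 1) · |R| ^ (rc (Σ |vᵢ| + 1)) ≥ |v|`. -/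
theorem runtime_complexity_gives_sup_interpretation {Sym : Type}
    (C D : Set Sym) (hCD : Disjoint C D)
    (R : List (Trm Sym × Trm Sym))
    (hvar : ∀ p ∈ R, ∀ x : ℕ, VarIn x p.2 → VarIn x p.1)
    (hR : 1 ≤ (R.map fun p => size p.1 + size p.2).sum)
    (hterm : WellFounded (fun s t : Trm Sym => Rw R t s))
    (rc : ℕ → ℕ)
    (hrc : ∀ (g : Sym) (us : List (Trm Sym)) (n : ℕ) (s : Trm Sym) (m : ℕ),
      g ∈ D → (∀ t ∈ us, CTerm C t) → RwN R n (.app g us) s →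
      size (Trm.app g us) ≤ m → n ≤ rc m)
    (f : Sym) (hf : f ∈ D) (vs : List (Trm Sym)) (hvs : ∀ t ∈ vs, CTerm C t)
    (v : Trm Sym) (hv : CTerm C v) (n : ℕ) (hred : RwN R n (.app f vs) v) :
    size v ≤ ((vs.map size).sum + 1) *
      ((R.map fun p => size p.1 + size p.2).sum) ^ (rc ((vs.map size).sum + 1)) :=
  runtime_complexity_gives_sup_interpretation_general C D R hvar hR rc hrc f hf vs hvs v n hred
end
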